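/- arXiv:2109.04286 — 2 statements merged into one kernel-verified Lean document; each statement's English description precedes it below -/
import Mathlib

section
/- Let d, K, m be natural numbers, let C : Fin m → (Fin d × Fin (K+1)) → ℝ be first-layer kernel weights, let h : (Fin m → ℝ) → ℝ be an arbitrary continuation function, and fix a coordinate (i,k) ∈ Fin d × Fin (K+1). Suppose the composite function f = h ∘ L_C is independent of the input coordinate (i,k). Define C' by C' b = Function.update (C b) (i,k) 0 for each b ∈ Fin m. Then C' b (i,k) = 0 for all b, and h ∘ L_{C'} = h ∘ L_C as functions; i.e., f admits a representation in which the weights of all m first-layer kernels at position (i,k) are zero. (This is the inclusion F ⊆ F₀ in the proof of Theorem 1.) -/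
/-- The first 1D-convolution layer: `m` kernels of shape `d × (K+1)`,
each producing the weighted sum of the input entries. -/
def convLayer {d K m : ℕ} (C : Fin m → (Fin d × Fin (K+1)) → ℝ)
    (X : (Fin d × Fin (K+1)) → ℝ) : Fin m → ℝ :=
  fun b => ∑ p : Fin d × Fin (K+1), C b p * X p

theorem convLayer_update_weights_zero {d K m : ℕ} (C : Fin m → (Fin d × Fin (K+1)) → ℝ)
    (ik : Fin d × Fin (K+1)) (X : (Fin d × Fin (K+1)) → ℝ) :
    convLayer (fun b => Function.update (C b) ik 0) X = convLayer C (Function.update X ik 0) := by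
  funext b
  refine Finset.sum_congr rfl fun p _ => ?_
  by_cases hp : p = ik
  · simp [hp]
  · simp [Function.update_of_ne hp]

/-- If `h ∘ convLayer C` is independent of the input coordinate `ik`, then the
modified weights `C'` (obtained by zeroing every kernel's weight at `ik`)
satisfy `C' b ik = 0` for all `b` and realize the same composite function.
(Inclusion `F ⊆ F₀` in the proof of Theorem 1.) -/
theorem independent_imp_zero_kernel_representation
    (d K m : ℕ) (C : Fin m → (Fin d × Fin (K+1)) → ℝ)
    (h : (Fin m → ℝ) → ℝ)
    (ik : Fin d × Fin (K+1))
    (hindep : ∀ (X : (Fin d × Fin (K+1)) → ℝ) (v : ℝ),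
      (h ∘ convLayer C) (Function.update X ik v) = (h ∘ convLayer C) X) :
    (∀ b : Fin m, (fun b' => Function.update (C b') ik 0) b ik = 0) ∧
      h ∘ convLayer (fun b' => Function.update (C b') ik 0) = h ∘ convLayer C :=
  ⟨fun b => Function.update_self ik 0 (C b),
    funext fun X => (congrArg h (convLayer_update_weights_zero C ik X)).trans (hindep X 0)⟩
end

section
/- Theorem 1 (functional form). Let d, K, m be natural numbers, let C : Fin m → (Fin d × Fin (K+1)) → ℝ be first-layer kernel weights, let h : (Fin m → ℝ) → ℝ be an arbitrary continuation function, and fix a coordinate (i,k) ∈ Fin d × Fin (K+1). Then the composite function h ∘ L_C is independent of the input coordinate (i,k) if and only if there exist kernel weights C' : Fin m → (Fin d × Fin (K+1)) → ℝ with C' b (i,k) = 0 for every b ∈ Fin m such that h ∘ L_{C'} = h ∘ L_C. -/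
section UpdateMul

variable {ι R : Type*} [DecidableEq ι] [MulZeroClass R]

theorem update_zero_mul_eq_mul_update_zero (c X : ι → R) (i p : ι) :
    Function.update c i 0 p * X p = c p * Function.update X i 0 p := by
  rcases eq_or_ne p i with rfl | hp <;> simp [*]

theorem mul_update_eq_mul_of_eq_zero {c : ι → R} {i : ι} (hc : c i = 0) (X : ι → R) (v : R)
    (p : ι) : c p * Function.update X i v p = c p * X p := by
  rcases eq_or_ne p i with rfl | hp <;> simp [*]

end UpdateMul

section ConvLayer

variable {d K m : ℕ}

theorem convLayer_update_kernel_zero (C : Fin m → (Fin d × Fin (K+1)) → ℝ)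
    (ik : Fin d × Fin (K+1)) (X : (Fin d × Fin (K+1)) → ℝ) :
    convLayer (fun b => Function.update (C b) ik 0) X = convLayer C (Function.update X ik 0) :=
  funext fun b => Finset.sum_congr rfl fun p _ => update_zero_mul_eq_mul_update_zero (C b) X ik p

theorem convLayer_update_of_kernel_eq_zero {C : Fin m → (Fin d × Fin (K+1)) → ℝ}
    {ik : Fin d × Fin (K+1)} (hC : ∀ b, C b ik = 0) (X : (Fin d × Fin (K+1)) → ℝ) (v : ℝ) :
    convLayer C (Function.update X ik v) = convLayer C X :=
  funext fun b => Finset.sum_congr rfl fun p _ => mul_update_eq_mul_of_eq_zero (hC b) X v p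

end ConvLayer

/-- Theorem 1 (functional form): `h ∘ convLayer C` is independent of the input
coordinate `ik` iff it admits a representation whose first-layer kernel
weights at `ik` are all zero. -/
theorem independent_iff_zero_kernel_representation
    (d K m : ℕ) (C : Fin m → (Fin d × Fin (K+1)) → ℝ)
    (h : (Fin m → ℝ) → ℝ)
    (ik : Fin d × Fin (K+1)) :
    (∀ (X : (Fin d × Fin (K+1)) → ℝ) (v : ℝ),
        (h ∘ convLayer C) (Function.update X ik v) = (h ∘ convLayer C) X)
      ↔ ∃ C' : Fin m → (Fin d × Fin (K+1)) → ℝ,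
          (∀ b : Fin m, C' b ik = 0) ∧ h ∘ convLayer C' = h ∘ convLayer C := by
  constructor
  · intro hindep
    refine ⟨fun b => Function.update (C b) ik 0, fun b => Function.update_self _ _ _, ?_⟩
    funext X
    exact (congrArg h (convLayer_update_kernel_zero C ik X)).trans (hindep X 0)
  · rintro ⟨C', hC'_zero, hrep⟩ X v
    rw [← hrep]
    exact congrArg h (convLayer_update_of_kernel_eq_zero hC'_zero X v)
end
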